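/- The function f(x,y) = -(1-2ρ)log(E + x² + y²) on ℝ² with the metric g = (dx² + dy²)/(E + x² + y²) satisfies Ric + ∇²f = ρRg, where ∇²f is the Hessian of f with respect to g, Ric is the Ricci curvature, and R the scalar curvature; i.e., (ℝ², g, f) is a steady gradient Ricci–Bourguignon soliton. -/

import Mathlib

open Real

noncomputable section

/-- Coordinate partial derivative on `ℝ²`. -/
def pd (i : Fin 2) (f : (Fin 2 → ℝ) → ℝ) (p : Fin 2 → ℝ) : ℝ :=
  fderiv ℝ f p (Pi.single i 1)

/-- Christoffel symbols `Γ^k_{ij}` of a metric `g` on `ℝ²`. -/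
def christoffel (g : (Fin 2 → ℝ) → Matrix (Fin 2) (Fin 2) ℝ)
    (p : Fin 2 → ℝ) (k i j : Fin 2) : ℝ :=
  (1 / 2) * ∑ l, (g p)⁻¹ k l *
    (pd i (fun q => g q l j) p + pd j (fun q => g q i l) p - pd l (fun q => g q i j) p)

/-- Riemann curvature `R^l_{ijk}`. -/
def riemann (g : (Fin 2 → ℝ) → Matrix (Fin 2) (Fin 2) ℝ)
    (p : Fin 2 → ℝ) (l i j k : Fin 2) : ℝ :=
  pd i (fun q => christoffel g q l j k) p - pd j (fun q => christoffel g q l i k) p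
    + ∑ m, (christoffel g p l i m * christoffel g p m j k
            - christoffel g p l j m * christoffel g p m i k)

/-- Ricci curvature `Ric_{ij} = Σ_k R^k_{kij}` (contraction of the Riemann tensor). -/
def ricci (g : (Fin 2 → ℝ) → Matrix (Fin 2) (Fin 2) ℝ)
    (p : Fin 2 → ℝ) (i j : Fin 2) : ℝ :=
  ∑ k, riemann g p k k i j

/-- Scalar curvature `R = Σ_{ij} g^{ij} Ric_{ij}`. -/
def scalarCurv (g : (Fin 2 → ℝ) → Matrix (Fin 2) (Fin 2) ℝ) (p : Fin 2 → ℝ) : ℝ :=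
  ∑ i, ∑ j, (g p)⁻¹ i j * ricci g p i j

/-- Hessian of `f` with respect to the Levi-Civita connection of `g`:
`(∇²f)_{ij} = ∂_i ∂_j f - Γ^k_{ij} ∂_k f`. -/
def hess (g : (Fin 2 → ℝ) → Matrix (Fin 2) (Fin 2) ℝ)
    (f : (Fin 2 → ℝ) → ℝ) (p : Fin 2 → ℝ) (i j : Fin 2) : ℝ :=
  pd i (fun q => pd j f q) p - ∑ k, christoffel g p k i j * pd k f p

/-- The cigar Ricci–Bourguignon metric `g = (dx² + dy²)/(E + x² + y²)`. -/
def cigarRB (E : ℝ) : (Fin 2 → ℝ) → Matrix (Fin 2) (Fin 2) ℝ :=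
  fun p => (1 / (E + p 0 ^ 2 + p 1 ^ 2)) • (1 : Matrix (Fin 2) (Fin 2) ℝ)

/-- The potential function `f = -(1-2ρ) log(E + x² + y²)`. -/
def cigarPot (E ρ : ℝ) : (Fin 2 → ℝ) → ℝ :=
  fun p => -(1 - 2 * ρ) * Real.log (E + p 0 ^ 2 + p 1 ^ 2)

/-! The metric `g = δ / S`, `S = E + x² + y²`, is conformally flat, so everything in the soliton
equation is rational in `x, y`: the Christoffel symbols `Γᵏᵢⱼ = (δᵢⱼ xₖ - δᵢₖ xⱼ - δⱼₖ xᵢ) / S` and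
the gradient `∇f = -2(1 - 2ρ) x / S` are linear forms divided by `S`, which are differentiated
explicitly. This gives `Ric = K g` and `R = 2K` for the Gaussian curvature `K = 2E / S`, and
`∇²f = -(1 - 2ρ) K g`, so the soliton equation reduces to `1 - (1 - 2ρ) - 2ρ = 0`. -/

open Matrix

local notation "δ" => (1 : Matrix (Fin 2) (Fin 2) ℝ)

def cigarGaussCurv (E : ℝ) (p : Fin 2 → ℝ) : ℝ :=
  2 * E / (E + p 0 ^ 2 + p 1 ^ 2)

lemma hasFDerivAt_cigar_denom (E : ℝ) (p : Fin 2 → ℝ) :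
    HasFDerivAt (fun q : Fin 2 → ℝ => E + q 0 ^ 2 + q 1 ^ 2)
      (LinearMap.toContinuousLinearMap (dotProductBilin ℝ ℝ (2 • p))) p := by
  have hsq (k : Fin 2) : HasFDerivAt (fun q : Fin 2 → ℝ => q k ^ 2)
      ((2 * p k) • ContinuousLinearMap.proj (R := ℝ) (φ := fun _ : Fin 2 => ℝ) k) p := by
    simpa using (hasFDerivAt_apply (𝕜 := ℝ) (F' := fun _ => ℝ) k p).pow 2
  refine (((hsq 0).const_add E).fun_add (hsq 1)).congr_fderiv ?_
  ext v
  simp [dotProduct, Fin.sum_univ_two]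

lemma cigarRB_apply (E : ℝ) (q : Fin 2 → ℝ) (a b : Fin 2) :
    cigarRB E q a b = δ a b / (E + q 0 ^ 2 + q 1 ^ 2) := by
  simp [cigarRB, div_eq_inv_mul]

section

variable {E : ℝ} (hE : 0 < E)
include hE

lemma pd_const_div_cigar_denom (a : ℝ) (p : Fin 2 → ℝ) (i : Fin 2) :
    pd i (fun q => a / (E + q 0 ^ 2 + q 1 ^ 2)) p =
      -(a * (2 * p i)) / (E + p 0 ^ 2 + p 1 ^ 2) ^ 2 := by
  have hS : E + p 0 ^ 2 + p 1 ^ 2 ≠ 0 := by positivity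
  have hinv : HasFDerivAt (fun q : Fin 2 → ℝ => (E + q 0 ^ 2 + q 1 ^ 2)⁻¹) _ p :=
    (hasDerivAt_inv hS).comp_hasFDerivAt p (hasFDerivAt_cigar_denom E p)
  simp only [div_eq_mul_inv]
  rw [pd, (hinv.const_mul a).fderiv]
  simp only [nsmul_eq_mul, Nat.cast_ofNat, neg_smul, smul_neg, _root_.neg_apply,
    _root_.smul_apply, LinearMap.coe_toContinuousLinearMap',
    dotProductBilin_apply_apply, dotProduct_single, Pi.mul_apply, Pi.ofNat_apply, mul_one,
    smul_eq_mul]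
  ring

lemma pd_dotProduct_div_cigar_denom (c p : Fin 2 → ℝ) (i : Fin 2) :
    pd i (fun q => c ⬝ᵥ q / (E + q 0 ^ 2 + q 1 ^ 2)) p =
      (c i * (E + p 0 ^ 2 + p 1 ^ 2) - c ⬝ᵥ p * (2 * p i)) / (E + p 0 ^ 2 + p 1 ^ 2) ^ 2 := by
  have hS : E + p 0 ^ 2 + p 1 ^ 2 ≠ 0 := by positivity
  have hc : HasFDerivAt (fun q : Fin 2 → ℝ => c ⬝ᵥ q)
      (LinearMap.toContinuousLinearMap (dotProductBilin ℝ ℝ c)) p :=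
    (LinearMap.toContinuousLinearMap (dotProductBilin ℝ ℝ c)).hasFDerivAt
  have hinv : HasFDerivAt (fun q : Fin 2 → ℝ => (E + q 0 ^ 2 + q 1 ^ 2)⁻¹) _ p :=
    (hasDerivAt_inv hS).comp_hasFDerivAt p (hasFDerivAt_cigar_denom E p)
  simp only [div_eq_mul_inv]
  rw [pd, (hc.fun_mul hinv).fderiv]
  simp only [_root_.add_apply, _root_.smul_apply, nsmul_eq_mul, Nat.cast_ofNat,
    neg_smul, _root_.neg_apply, LinearMap.coe_toContinuousLinearMap',
    dotProductBilin_apply_apply, dotProduct_single, Pi.mul_apply, Pi.ofNat_apply, mul_one,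
    smul_eq_mul]
  field_simp
  ring

lemma inv_cigarRB (q : Fin 2 → ℝ) :
    (cigarRB E q)⁻¹ = (E + q 0 ^ 2 + q 1 ^ 2) • δ := by
  have hS : E + q 0 ^ 2 + q 1 ^ 2 ≠ 0 := by positivity
  refine inv_eq_right_inv ?_
  rw [cigarRB, smul_mul_smul_comm, one_mul, one_div, inv_mul_cancel₀ hS, one_smul]

lemma christoffel_cigarRB (q : Fin 2 → ℝ) (k i j : Fin 2) :
    christoffel (cigarRB E) q k i j =
      (δ i j • δ k - δ i k • δ j - δ j k • δ i) ⬝ᵥ q / (E + q 0 ^ 2 + q 1 ^ 2) := by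
  simp only [christoffel, cigarRB_apply, pd_const_div_cigar_denom hE, inv_cigarRB hE,
    Fin.sum_univ_two]
  fin_cases k <;> fin_cases i <;> fin_cases j <;> simp [one_apply, dotProduct] <;> field_simp

lemma ricci_cigarRB (p : Fin 2 → ℝ) (i j : Fin 2) :
    ricci (cigarRB E) p i j = cigarGaussCurv E p * cigarRB E p i j := by
  simp only [ricci, riemann, christoffel_cigarRB hE, pd_dotProduct_div_cigar_denom hE,
    cigarRB_apply, cigarGaussCurv, Fin.sum_univ_two]
  fin_cases i <;> fin_cases j <;> simp [one_apply, dotProduct] <;> field_simp <;> ring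

lemma scalarCurv_cigarRB (p : Fin 2 → ℝ) :
    scalarCurv (cigarRB E) p = 2 * cigarGaussCurv E p := by
  simp only [scalarCurv, ricci_cigarRB hE, inv_cigarRB hE, cigarRB_apply, Fin.sum_univ_two,
    Matrix.smul_apply, one_apply, Fin.isValue, ↓reduceIte, zero_ne_one, one_ne_zero,
    smul_eq_mul, mul_one, mul_zero, zero_div, add_zero, zero_add]
  field_simp
  ring

lemma pd_cigarPot (ρ : ℝ) (q : Fin 2 → ℝ) (j : Fin 2) :
    pd j (cigarPot E ρ) q = (-(2 * (1 - 2 * ρ)) • δ j) ⬝ᵥ q / (E + q 0 ^ 2 + q 1 ^ 2) := by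
  have hS : E + q 0 ^ 2 + q 1 ^ 2 ≠ 0 := by positivity
  unfold pd cigarPot
  rw [(((hasFDerivAt_cigar_denom E q).log hS).const_mul _).fderiv]
  fin_cases j <;> simp [one_apply, dotProduct] <;> field_simp <;> ring

lemma hess_cigarPot (ρ : ℝ) (p : Fin 2 → ℝ) (i j : Fin 2) :
    hess (cigarRB E) (cigarPot E ρ) p i j =
      -(1 - 2 * ρ) * cigarGaussCurv E p * cigarRB E p i j := by
  simp only [hess, pd_cigarPot hE, pd_dotProduct_div_cigar_denom hE, christoffel_cigarRB hE,
    cigarRB_apply, cigarGaussCurv, Fin.sum_univ_two]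
  fin_cases i <;> fin_cases j <;> simp [one_apply, dotProduct] <;> field_simp <;> ring

end

/-- `(ℝ², g, f)` with `g = (dx²+dy²)/(E+x²+y²)` and
`f = -(1-2ρ) log(E+x²+y²)` satisfies the steady gradient Ricci–Bourguignon soliton
equation `Ric + ∇²f - ρ R g = 0`. -/
theorem cigar_is_RB_soliton (E ρ : ℝ) (hE : 0 < E) :
    ∀ p : Fin 2 → ℝ, ∀ i j : Fin 2,
      ricci (cigarRB E) p i j + hess (cigarRB E) (cigarPot E ρ) p i j
        - ρ * scalarCurv (cigarRB E) p * cigarRB E p i j = 0 := by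
  intro p i j
  rw [ricci_cigarRB hE, hess_cigarPot hE, scalarCurv_cigarRB hE]
  ring
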